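/- For every t ≤ H, the probability — under the trajectory distribution on times {0, ..., H} started at X_0 = x₀ that uses the closed-loop kernel of the deterministic policy π̂ at times s < t and the closed-loop kernel κ_π of the stochastic policy π at times t ≤ s < H — of the event {X_τ ∈ C for all t ≤ τ ≤ H} equals ∑_{x} ((ν t) x).toReal · Ψ(x, t), where ν t is the time-t marginal of the online π̂-driven chain started at x₀. -/

import Mathlib

open scoped BigOperators

/-- Trajectory distribution of the time-dependent kernel `κ` started at state `x` at time `t`,
run for `n` further steps: a PMF on functions `Fin (n+1) → X` recording `X_t, ..., X_{t+n}`,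
with `X_t = x` and `X_{s+1} ~ κ s (X_s)` sampled via iterated `PMF.bind`. -/
noncomputable def traj {X : Type*} (κ : ℕ → X → PMF X) : ℕ → (n : ℕ) → X → PMF (Fin (n + 1) → X)
  | _, 0, x => PMF.pure fun _ => x
  | t, n + 1, x => (κ t x).bind fun x' => (traj κ (t + 1) n x').map (Fin.cons x)

/-- Safe probability `Ψ_κ(x, t)`: the probability, under the trajectory distribution of `κ`
started at `x` at time `t` over horizon `H`, that every state of the trajectory lies in the
safe set `C`. -/
noncomputable def safeProb {X : Type*} [Fintype X] [DecidableEq X]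
    (C : Set X) [DecidablePred (· ∈ C)] (κ : ℕ → X → PMF X) (H t : ℕ) (x : X) : ℝ :=
  ∑ f : Fin (H - t + 1) → X,
    if ∀ i : Fin (H - t + 1), f i ∈ C then ((traj κ t (H - t) x) f).toReal else 0

/-!
The event `{X_τ ∈ C for t ≤ τ ≤ H}` only sees the coordinates of the trajectory from time `t`
on, so its probability is that of the all-safe event under the law of the trajectory tail. By the
Markov property of `traj`, this tail law is the time-`t` marginal bound with the trajectory
distribution started at time `t`. The switched kernel is the online one before time `t`, so that
marginal is `ν t`, and it is `κπ` from time `t` on, so the inner probability is `Ψ(·, t)`.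
-/

-- `marginal κ t₀ t x` is the law of `X_{t₀ + t}` given `X_{t₀} = x`.
noncomputable def marginal {X : Type*} (κ : ℕ → X → PMF X) : ℕ → ℕ → X → PMF X
  | _, 0, x => PMF.pure x
  | t₀, t + 1, x => (κ t₀ x).bind (marginal κ (t₀ + 1) t)

theorem marginal_succ {X : Type*} (κ : ℕ → X → PMF X) (t₀ t : ℕ) (x : X) :
    marginal κ t₀ (t + 1) x = (marginal κ t₀ t x).bind (κ (t₀ + t)) := by
  induction t generalizing t₀ x with
  | zero => simp [marginal]
  | succ t ih =>
    rw [marginal, marginal, PMF.bind_bind]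
    congr 1
    funext y
    rw [ih, show t₀ + 1 + t = t₀ + (t + 1) by omega]

theorem marginal_eq_of_bind_recursion {X : Type*} (κ : ℕ → X → PMF X) (ν : ℕ → PMF X) (x₀ : X)
    (t : ℕ) (h₀ : ν 0 = PMF.pure x₀) (h : ∀ s < t, ν (s + 1) = (ν s).bind (κ s)) :
    marginal κ 0 t x₀ = ν t := by
  induction t with
  | zero => rw [h₀]; rfl
  | succ t ih =>
    rw [marginal_succ, ih fun s hs => h s (by omega), h t (by omega), Nat.zero_add]

theorem traj_congr {X : Type*} {κ κ' : ℕ → X → PMF X} {t₀ : ℕ}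
    (h : ∀ s, t₀ ≤ s → κ s = κ' s) (n : ℕ) (x : X) : traj κ t₀ n x = traj κ' t₀ n x := by
  induction n generalizing t₀ x with
  | zero => rfl
  | succ n ih =>
    simp only [traj, h t₀ le_rfl, ih (t₀ := t₀ + 1) fun s hs => h s (by omega)]

def dropPrefix {X : Type*} {n : ℕ} (t : ℕ) (f : Fin (n + t + 1) → X) (j : Fin (n + 1)) : X :=
  f ⟨j + t, by omega⟩

theorem traj_map_dropPrefix {X : Type*} (κ : ℕ → X → PMF X) (n t t₀ : ℕ) (x : X) :
    (traj κ t₀ (n + t) x).map (dropPrefix t) = (marginal κ t₀ t x).bind (traj κ (t₀ + t) n) := by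
  induction t generalizing t₀ x with
  | zero => exact (PMF.map_id _).trans (PMF.pure_bind _ _).symm
  | succ t ih =>
    have h_cons : ∀ y, (traj κ (t₀ + 1) (n + t) y).map (dropPrefix (t + 1) ∘ Fin.cons x) =
        (traj κ (t₀ + 1) (n + t) y).map (dropPrefix t) := fun y => rfl
    change PMF.map _ (traj κ t₀ (n + t + 1) x) = _
    rw [traj, PMF.map_bind]
    simp only [PMF.map_comp, h_cons, ih]
    rw [marginal, PMF.bind_bind, Nat.add_right_comm, Nat.add_assoc]

theorem PMF.sum_ite_toReal_eq_toOuterMeasure {α : Type*} [Fintype α] (p : PMF α) (φ : α → Prop)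
    [DecidablePred φ] :
    (∑ a, if φ a then (p a).toReal else 0) = (p.toOuterMeasure {a | φ a}).toReal := by
  rw [← Finset.sum_filter, ← ENNReal.toReal_sum fun a _ => p.apply_ne_top a,
    ← p.toOuterMeasure_apply_finset, Finset.coe_filter_univ]

theorem PMF.toOuterMeasure_apply_ne_top {α : Type*} (p : PMF α) (s : Set α) :
    p.toOuterMeasure s ≠ ⊤ :=
  p.toOuterMeasure_apply s ▸ p.tsum_coe_indicator_ne_top s

theorem setOf_forall_le_imp_eq_preimage_dropPrefix {X : Type*} (C : Set X) (n t : ℕ) :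
    {f : Fin (n + t + 1) → X | ∀ i : Fin (n + t + 1), t ≤ (i : ℕ) → f i ∈ C} =
      dropPrefix t ⁻¹' {g | ∀ j, g j ∈ C} := by
  ext f
  refine ⟨fun h j => h _ (Nat.le_add_left t j), fun h i hi => ?_⟩
  simpa [dropPrefix, Nat.sub_add_cancel hi] using h ⟨i - t, by omega⟩

theorem switched_policy_safe_probability_decomposition_general
    {X : Type*} [Fintype X] [DecidableEq X]
    {U : Type*}
    (C : Set X) [DecidablePred (· ∈ C)] (H : ℕ)
    (P : X → U → PMF X) (x₀ : X)
    (πhat : ℕ → X → U)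
    -- closed-loop kernel of the stochastic policy π
    (κπ : ℕ → X → PMF X)
    -- time-t marginals of the online π̂-driven chain started at x₀
    (ν : ℕ → PMF X) (hν0 : ν 0 = PMF.pure x₀)
    (hν : ∀ s, ν (s + 1) = (ν s).bind fun x => P x (πhat s x)) :
    ∀ t, t ≤ H →
      (∑ f : Fin (H + 1) → X,
          if ∀ i : Fin (H + 1), t ≤ (i : ℕ) → f i ∈ C then
            ((traj (fun s x => if s < t then P x (πhat s x) else κπ s x) 0 H x₀) f).toReal
          else 0)
        = ∑ x : X, ((ν t) x).toReal * safeProb C κπ H t x := by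
  intro t ht
  obtain ⟨n, rfl⟩ : ∃ n, H = n + t := ⟨H - t, (Nat.sub_add_cancel ht).symm⟩
  set κ : ℕ → X → PMF X := fun s x => if s < t then P x (πhat s x) else κπ s x
  have h_marginal : marginal κ 0 t x₀ = ν t :=
    marginal_eq_of_bind_recursion κ ν x₀ t hν0 fun s hs => by simp only [hν, κ, if_pos hs]
  have h_tail : ∀ y, traj κ t n y = traj κπ t n y :=
    traj_congr (fun s hs => funext fun x => if_neg (Nat.not_lt.mpr hs)) n
  simp only [safeProb, PMF.sum_ite_toReal_eq_toOuterMeasure]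
  rw [Nat.add_sub_cancel, setOf_forall_le_imp_eq_preimage_dropPrefix,
    ← PMF.toOuterMeasure_map_apply, traj_map_dropPrefix, PMF.toOuterMeasure_bind_apply,
    tsum_fintype, ENNReal.toReal_sum]
  · simp only [ENNReal.toReal_mul, h_marginal, Nat.zero_add, h_tail]
  · exact fun y _ =>
      ENNReal.mul_ne_top (PMF.apply_ne_top _ _) (PMF.toOuterMeasure_apply_ne_top _ _)

/-- **Switched-policy decomposition (proof of Theorem 1).** For every `t ≤ H`, the probability
— under the trajectory distribution on times `{0, ..., H}` started at `X_0 = x₀` that uses the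
closed-loop kernel of the deterministic policy `π̂` at times `s < t` and the closed-loop kernel
`κπ` of the stochastic policy `π` at times `t ≤ s < H` — of the event
`{X_τ ∈ C for all t ≤ τ ≤ H}` equals `∑ x, ν t x · Ψ(x, t)`, where `ν t` is the time-`t`
marginal of the online `π̂`-driven chain started at `x₀`. -/
theorem switched_policy_safe_probability_decomposition
    {X : Type*} [Fintype X] [Nonempty X] [DecidableEq X]
    {U : Type*} [Fintype U] [Nonempty U]
    (C : Set X) [DecidablePred (· ∈ C)] (H : ℕ)
    (P : X → U → PMF X) (x₀ : X)
    (π : ℕ → X → PMF U) (πhat : ℕ → X → U)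
    -- closed-loop kernel of the stochastic policy π
    (κπ : ℕ → X → PMF X) (hκπ : ∀ s x, κπ s x = (π s x).bind fun u => P x u)
    -- time-t marginals of the online π̂-driven chain started at x₀
    (ν : ℕ → PMF X) (hν0 : ν 0 = PMF.pure x₀)
    (hν : ∀ s, ν (s + 1) = (ν s).bind fun x => P x (πhat s x)) :
    ∀ t, t ≤ H →
      (∑ f : Fin (H + 1) → X,
          if ∀ i : Fin (H + 1), t ≤ (i : ℕ) → f i ∈ C then
            ((traj (fun s x => if s < t then P x (πhat s x) else κπ s x) 0 H x₀) f).toReal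
          else 0)
        = ∑ x : X, ((ν t) x).toReal * safeProb C κπ H t x :=
  switched_policy_safe_probability_decomposition_general C H P x₀ πhat κπ ν hν0 hν
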